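/- Let S₁₄(x,y,z) = x² + 2y² + 15z² + xy, T₁₄(x,y,z) = x² + 4y² + 7z² + xy, S₁₅(x,y,z) = x² + 7y² + 17z² + 7yz + zx, and T₁₅(x,y,z) = x² + 11y² + 11z² + 7yz + zx + xy. Then for every positive integer n, r(4n², S₁₅) = r(n², S₁₄) and r(4n², T₁₅) = r(n², T₁₄). -/
import Mathlib


open Matrix

noncomputable section

/-- A ternary quadratic form `a·x² + b·y² + c·z² + d·yz + e·zx + g·xy`
with integer coefficients. -/
structure TernaryQF where
  a : ℤ
  b : ℤ
  c : ℤ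
  d : ℤ
  e : ℤ
  g : ℤ
deriving DecidableEq

namespace TernaryQF

/-- Evaluation of the form in any commutative ring. -/
def evalR {R : Type*} [CommRing R] (f : TernaryQF) (x y z : R) : R :=
  (f.a : R) * x ^ 2 + (f.b : R) * y ^ 2 + (f.c : R) * z ^ 2 +
    (f.d : R) * (y * z) + (f.e : R) * (z * x) + (f.g : R) * (x * y)

def eval (f : TernaryQF) (x y z : ℤ) : ℤ := f.evalR x y z

def evalVec (f : TernaryQF) (v : Fin 3 → ℤ) : ℤ := f.eval (v 0) (v 1) (v 2)

/-- Non-classic integral: the coefficients are coprime. -/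
def NonClassic (f : TernaryQF) : Prop :=
  Nat.gcd f.a.natAbs (Nat.gcd f.b.natAbs (Nat.gcd f.c.natAbs
    (Nat.gcd f.d.natAbs (Nat.gcd f.e.natAbs f.g.natAbs)))) = 1

/-- Positive definiteness (equivalent, for a rational symmetric matrix, to
positivity of the Gram matrix). -/
def PosDefn (f : TernaryQF) : Prop :=
  ∀ x y z : ℤ, ¬(x = 0 ∧ y = 0 ∧ z = 0) → 0 < f.eval x y z

/-- `r n f`: the number of representations of `n` by `f`. -/
def r (f : TernaryQF) (n : ℤ) : ℕ :=
  Set.ncard {v : Fin 3 → ℤ | f.evalVec v = n}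

/-- `4·df`, four times the discriminant (determinant of the Gram matrix), an integer. -/
def disc4 (f : TernaryQF) : ℤ :=
  4 * f.a * f.b * f.c + f.g * f.d * f.e - f.a * f.d ^ 2 - f.b * f.e ^ 2 - f.c * f.g ^ 2

/-- `h_p(df, λ) = (p^{λ+1}-1)/(p-1) - (−4df/p)·(p^{λ}-1)/(p-1)`, written via geometric sums. -/
def hFactor (f : TernaryQF) (p lam : ℕ) : ℤ :=
  (∑ i ∈ Finset.range (lam + 1), (p : ℤ) ^ i) -
    jacobiSym (-f.disc4) p * ∑ i ∈ Finset.range lam, (p : ℤ) ^ i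

/-- A (positive definite non-classic integral) ternary form is strongly s-regular if it
represents a nonzero square and the representation numbers of squares satisfy the
multiplicative formula of Cooper–Lam type. -/
def StronglySRegular (f : TernaryQF) : Prop :=
  (∃ n : ℕ, 0 < n ∧ f.r ((n : ℤ) ^ 2) ≠ 0) ∧
    ∀ n₁ n₂ : ℕ, 0 < n₁ → 0 < n₂ →
      (∀ p : ℕ, p.Prime → p ∣ n₁ → p = 2 ∨ (p : ℤ) ∣ f.disc4) →
      Odd n₂ → IsCoprime (n₂ : ℤ) f.disc4 →
      (f.r ((n₁ : ℤ) ^ 2 * (n₂ : ℤ) ^ 2) : ℤ) =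
        (f.r ((n₁ : ℤ) ^ 2) : ℤ) *
          ∏ p ∈ n₂.primeFactors, f.hFactor p (n₂.factorization p)

/-- `m_s(f)`: the minimal positive integer whose square is represented by `f`. -/
def msf (f : TernaryQF) : ℕ := sInf {n : ℕ | 0 < n ∧ f.r ((n : ℤ) ^ 2) ≠ 0}

/-- The (rational) Gram matrix of the form. -/
def gram (f : TernaryQF) : Matrix (Fin 3) (Fin 3) ℚ :=
  !![(f.a : ℚ), (f.g : ℚ) / 2, (f.e : ℚ) / 2;
     (f.g : ℚ) / 2, (f.b : ℚ), (f.d : ℚ) / 2;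
     (f.e : ℚ) / 2, (f.d : ℚ) / 2, (f.c : ℚ)]

/-- Equivalence of ternary forms over ℤ. -/
def TEquiv (f g : TernaryQF) : Prop :=
  ∃ U : Matrix (Fin 3) (Fin 3) ℤ, IsUnit U.det ∧
    (U.map ((↑) : ℤ → ℚ)).transpose * f.gram * U.map ((↑) : ℤ → ℚ) = g.gram

/-- The Gram matrix viewed over `ℚ_p`. -/
def gramPadic (p : ℕ) [Fact p.Prime] (f : TernaryQF) : Matrix (Fin 3) (Fin 3) ℚ_[p] :=
  f.gram.map (fun x : ℚ => (x : ℚ_[p]))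

/-- The coercion `ℤ_p → ℚ_p`. -/
def coeQp {p : ℕ} [Fact p.Prime] (x : ℤ_[p]) : ℚ_[p] := x

/-- Two matrices over `ℚ_p` are equivalent over `ℤ_p` if `Uᵀ A U = B` for some
`U ∈ GL₃(ℤ_p)`. -/
def EquivZp (p : ℕ) [Fact p.Prime] (A B : Matrix (Fin 3) (Fin 3) ℚ_[p]) : Prop :=
  ∃ U : Matrix (Fin 3) (Fin 3) ℤ_[p], IsUnit U.det ∧
    (U.map coeQp).transpose * A * U.map coeQp = B

/-- Two forms lie in the same genus: locally equivalent at every (finite) prime. -/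
def SameGenus (f g : TernaryQF) : Prop :=
  ∀ (p : ℕ) [Fact p.Prime], EquivZp p (gramPadic p f) (gramPadic p g)

/-- `Λ_p(f) = {v ∈ ℤ³ : f(v+z) ≡ f(z) (mod p) for all z ∈ ℤ³}`. -/
def Lam (p : ℕ) (f : TernaryQF) : Set (Fin 3 → ℤ) :=
  {v | ∀ z : Fin 3 → ℤ, (p : ℤ) ∣ (f.evalVec (v + z) - f.evalVec z)}

/-- `g` is a Watson `λ_p`-transform of `f`: `g` is obtained by expressing `f` on a basis
of `Λ_p(f)` and dividing by the largest power of `p` dividing all values. -/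
def IsWatson (p : ℕ) (f g : TernaryQF) : Prop :=
  ∃ (B : Matrix (Fin 3) (Fin 3) ℤ) (k : ℕ),
    Set.range B.mulVec = Lam p f ∧
    (∀ v : Fin 3 → ℤ, f.evalVec (B.mulVec v) = (p : ℤ) ^ k * g.evalVec v) ∧
    ¬ ∀ v : Fin 3 → ℤ, (p : ℤ) ∣ g.evalVec v

/-- The order of the (finite, for positive definite forms) integral isometry group. -/
def autCount (f : TernaryQF) : ℕ :=
  Set.ncard {U : Matrix (Fin 3) (Fin 3) ℤ | IsUnit U.det ∧
    (U.map ((↑) : ℤ → ℚ)).transpose * f.gram * U.map ((↑) : ℤ → ℚ) = f.gram}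

end TernaryQF

open TernaryQF


lemma zmod4_dvd {z : ℤ} (h : (z : ZMod 4) = 0 ∨ (z : ZMod 4) = 2) : (2:ℤ) ∣ z := by
  rcases h with h | h
  · have := (ZMod.intCast_zmod_eq_zero_iff_dvd z 4).mp h
    omega
  · have : (z : ZMod 4) = ((2:ℤ) : ZMod 4) := by exact_mod_cast h
    have := (ZMod.intCast_eq_intCast_iff _ _ _).mp this
    rw [Int.ModEq] at this
    omega

lemma modS (x y z : ℤ) (h : (4:ℤ) ∣ (x^2+7*y^2+17*z^2+7*(y*z)+z*x)) :
    (2:ℤ) ∣ z ∧ (2:ℤ) ∣ (x+y) := by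
  have h4 : (((x^2+7*y^2+17*z^2+7*(y*z)+z*x) : ℤ) : ZMod 4) = 0 :=
    (ZMod.intCast_zmod_eq_zero_iff_dvd _ 4).mpr h
  push_cast at h4
  have key : ∀ a b c : ZMod 4, a^2+7*b^2+17*c^2+7*(b*c)+c*a = 0 →
      ((c = 0 ∨ c = 2) ∧ (a+b = 0 ∨ a+b = 2)) := by decide
  obtain ⟨h1, h2⟩ := key _ _ _ h4
  refine ⟨zmod4_dvd h1, zmod4_dvd ?_⟩
  push_cast
  exact h2

lemma modT (x y z : ℤ) (h : (4:ℤ) ∣ (x^2+11*y^2+11*z^2+7*(y*z)+z*x+x*y)) :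
    (2:ℤ) ∣ (x+z) ∧ (2:ℤ) ∣ (y+z) := by
  have h4 : (((x^2+11*y^2+11*z^2+7*(y*z)+z*x+x*y) : ℤ) : ZMod 4) = 0 :=
    (ZMod.intCast_zmod_eq_zero_iff_dvd _ 4).mpr h
  push_cast at h4
  have key : ∀ a b c : ZMod 4, a^2+11*b^2+11*c^2+7*(b*c)+c*a+a*b = 0 →
      ((a+c = 0 ∨ a+c = 2) ∧ (b+c = 0 ∨ b+c = 2)) := by decide
  obtain ⟨h1, h2⟩ := key _ _ _ h4
  constructor
  · apply zmod4_dvd; push_cast; exact h1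
  · apply zmod4_dvd; push_cast; exact h2


def mapS (w : Fin 3 → ℤ) : Fin 3 → ℤ :=
  ![-2 * w 0 - w 1 - w 2, -(w 1) - w 2, 2 * w 2]

def mapT (w : Fin 3 → ℤ) : Fin 3 → ℤ :=
  ![-2 * w 0 - w 1 - w 2, -(w 1) + w 2, w 1 + w 2]

lemma mapS_inj : Function.Injective mapS := by
  intro u v h
  have h0 := congrFun h 0
  have h1 := congrFun h 1
  have h2 := congrFun h 2
  simp [mapS] at h0 h1 h2
  funext i
  fin_cases i <;> simp <;> omega

lemma mapT_inj : Function.Injective mapT := by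
  intro u v h
  have h0 := congrFun h 0
  have h1 := congrFun h 1
  have h2 := congrFun h 2
  simp [mapT] at h0 h1 h2
  funext i
  fin_cases i <;> simp <;> omega

/-- `r(4n², S₁₅) = r(n², S₁₄)` and `r(4n², T₁₅) = r(n², T₁₄)`. -/
theorem stmt14 (n : ℕ) (hn : 0 < n) :
    (TernaryQF.mk 1 7 17 7 1 0).r (4 * (n : ℤ) ^ 2) =
        (TernaryQF.mk 1 2 15 0 0 1).r ((n : ℤ) ^ 2) ∧
    (TernaryQF.mk 1 11 11 7 1 1).r (4 * (n : ℤ) ^ 2) =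
        (TernaryQF.mk 1 4 7 0 0 1).r ((n : ℤ) ^ 2) := by
  constructor
  · have himg : {v : Fin 3 → ℤ | (TernaryQF.mk 1 7 17 7 1 0).evalVec v = 4 * (n:ℤ)^2} =
        mapS '' {w : Fin 3 → ℤ | (TernaryQF.mk 1 2 15 0 0 1).evalVec w = (n:ℤ)^2} := by
      ext v
      simp only [Set.mem_setOf_eq, Set.mem_image]
      constructor
      · intro hv
        set x := v 0 with hx; set y := v 1 with hy; set z := v 2 with hz
        have hv' : x^2+7*y^2+17*z^2+7*(y*z)+z*x = 4*(n:ℤ)^2 := by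
          simpa [TernaryQF.evalVec, TernaryQF.eval, TernaryQF.evalR] using hv
        have hdvd : (4:ℤ) ∣ (x^2+7*y^2+17*z^2+7*(y*z)+z*x) := ⟨(n:ℤ)^2, hv'⟩
        obtain ⟨⟨c, hc⟩, ⟨d, hd⟩⟩ := modS x y z hdvd
        have hy2 : y = 2*d - x := by omega
        rw [hc, hy2] at hv'
        refine ⟨![d - x, x - 2*d - c, c], ?_, ?_⟩
        · simp only [Set.mem_setOf_eq, TernaryQF.evalVec, TernaryQF.eval, TernaryQF.evalR]
          simp
          have h4 : 4*((d - x)^2 + 2*(x - 2*d - c)^2 + 15*c^2 + (d - x)*(x - 2*d - c)) =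
              4*(n:ℤ)^2 := by linear_combination hv'
          linarith
        · funext i
          fin_cases i <;> simp [mapS] <;> omega
      · rintro ⟨w, hw, rfl⟩
        have hw' : (w 0)^2 + 2*(w 1)^2 + 15*(w 2)^2 + (w 0)*(w 1) = (n:ℤ)^2 := by
          simpa [TernaryQF.evalVec, TernaryQF.eval, TernaryQF.evalR] using hw
        simp only [TernaryQF.evalVec, TernaryQF.eval, TernaryQF.evalR, mapS]
        simp
        linear_combination 4*hw'
    rw [TernaryQF.r, TernaryQF.r, himg, Set.ncard_image_of_injective _ mapS_inj]
  · have himg : {v : Fin 3 → ℤ | (TernaryQF.mk 1 11 11 7 1 1).evalVec v = 4 * (n:ℤ)^2} =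
        mapT '' {w : Fin 3 → ℤ | (TernaryQF.mk 1 4 7 0 0 1).evalVec w = (n:ℤ)^2} := by
      ext v
      simp only [Set.mem_setOf_eq, Set.mem_image]
      constructor
      · intro hv
        set x := v 0 with hx; set y := v 1 with hy; set z := v 2 with hz
        have hv' : x^2+11*y^2+11*z^2+7*(y*z)+z*x+x*y = 4*(n:ℤ)^2 := by
          simpa [TernaryQF.evalVec, TernaryQF.eval, TernaryQF.evalR] using hv
        have hdvd : (4:ℤ) ∣ (x^2+11*y^2+11*z^2+7*(y*z)+z*x+x*y) := ⟨(n:ℤ)^2, hv'⟩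
        obtain ⟨⟨c, hc⟩, ⟨d, hd⟩⟩ := modT x y z hdvd
        -- w1 = (z-y)/2, w2 = (z+y)/2, w0 = (-x-z)/2
        have hx2 : x = 2*c - z := by omega
        have hy2 : y = 2*d - z := by omega
        rw [hx2, hy2] at hv'
        refine ⟨![-c, z - d, d], ?_, ?_⟩
        · simp only [Set.mem_setOf_eq, TernaryQF.evalVec, TernaryQF.eval, TernaryQF.evalR]
          simp
          have h4 : 4*((-c)^2 + 4*(z - d)^2 + 7*d^2 + (-c)*(z - d)) = 4*(n:ℤ)^2 := by
            linear_combination hv'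
          linarith
        · funext i
          fin_cases i <;> simp [mapT] <;> omega
      · rintro ⟨w, hw, rfl⟩
        have hw' : (w 0)^2 + 4*(w 1)^2 + 7*(w 2)^2 + (w 0)*(w 1) = (n:ℤ)^2 := by
          simpa [TernaryQF.evalVec, TernaryQF.eval, TernaryQF.evalR] using hw
        simp only [TernaryQF.evalVec, TernaryQF.eval, TernaryQF.evalR, mapT]
        simp
        linear_combination 4*hw'
    rw [TernaryQF.r, TernaryQF.r, himg, Set.ncard_image_of_injective _ mapT_inj]
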